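/- Let S be a finite set of points in the plane in convex position. Then no biplane graph on S is 6-connected. -/

import Mathlib

/-- A point in the plane. -/
abbrev Pt : Type := ℝ × ℝ

/-- A finite point set is in *general position* if no three of its points are collinear. -/
def InGenPos (S : Set Pt) : Prop :=
  ∀ p ∈ S, ∀ q ∈ S, ∀ r ∈ S, p ≠ q → p ≠ r → q ≠ r → ¬ Collinear ℝ ({p, q, r} : Set Pt)

/-- A point set is in *convex position* if no point lies in the convex hull of the others. -/
def InConvexPos (S : Set Pt) : Prop :=
  ∀ p ∈ S, p ∉ convexHull ℝ (S \ {p})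

/-- `E` is a set of unordered pairs of distinct points of `S`. -/
def IsEdgeSetOn (S : Set Pt) (E : Set (Sym2 Pt)) : Prop :=
  ∀ e ∈ E, ¬ e.IsDiag ∧ ∀ p ∈ e, p ∈ S

/-- The open segment spanned by an unordered pair of points. -/
def openSeg : Sym2 Pt → Set Pt :=
  Sym2.lift ⟨fun a b => openSegment ℝ a b, fun a b => openSegment_symm ℝ a b⟩

/-- Two edges *cross* if their open segments intersect. -/
def Cross (e f : Sym2 Pt) : Prop := (openSeg e ∩ openSeg f).Nonempty

/-- A *plane graph* on `S`: a geometric graph whose edges are pairwise noncrossing. -/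
def IsPlaneGraph (S : Set Pt) (E : Set (Sym2 Pt)) : Prop :=
  IsEdgeSetOn S E ∧ ∀ e ∈ E, ∀ f ∈ E, e ≠ f → ¬ Cross e f

/-- A *biplane graph* on `S`: the edge set splits into two plane graphs. -/
def IsBiplaneGraph (S : Set Pt) (E : Set (Sym2 Pt)) : Prop :=
  IsEdgeSetOn S E ∧ ∃ E₁ E₂ : Set (Sym2 Pt), E = E₁ ∪ E₂ ∧
    IsPlaneGraph S E₁ ∧ IsPlaneGraph S E₂

/-- The geometric graph `(S, E)` is `k`-connected: more than `k` vertices, and deleting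
any fewer than `k` vertices leaves a connected graph. -/
def KConnected (k : ℕ) (S : Set Pt) (E : Set (Sym2 Pt)) : Prop :=
  k < S.ncard ∧ ∀ C ⊆ S, C.ncard < k →
    ((SimpleGraph.fromEdgeSet E).induce (S \ C)).Connected

/-- A *triangulation* of `S`: an edge-maximal plane graph on `S`. -/
def IsTriangulation (S : Set Pt) (E : Set (Sym2 Pt)) : Prop :=
  IsPlaneGraph S E ∧ ∀ p ∈ S, ∀ q ∈ S, p ≠ q → s(p, q) ∉ E →
    ¬ IsPlaneGraph S (insert s(p, q) E)

/-- `{u,v}` is a *hull edge* of `S`: all other points of `S` lie strictly on one side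
of the line through `u` and `v`. -/
def IsHullEdge (S : Set Pt) (u v : Pt) : Prop :=
  u ≠ v ∧ ((∀ p ∈ S \ {u, v},
      0 < (v.1 - u.1) * (p.2 - u.2) - (v.2 - u.2) * (p.1 - u.1)) ∨
    (∀ p ∈ S \ {u, v},
      (v.1 - u.1) * (p.2 - u.2) - (v.2 - u.2) * (p.1 - u.1) < 0))

/-- A *fan* on a set `S` of at least 3 points in convex position. -/
def IsFan (S : Set Pt) (E : Set (Sym2 Pt)) : Prop :=
  InConvexPos S ∧ 3 ≤ S.ncard ∧ ∃ v₀ ∈ S,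
    E = {e | ∃ u ∈ S, ∃ v ∈ S, e = s(u, v) ∧ IsHullEdge S u v} ∪
        {e | ∃ p ∈ S, p ≠ v₀ ∧ e = s(v₀, p)}

/-- A *wheel*: one point in the interior of the convex hull, joined to all other points,
which are in convex position and joined along the hull. -/
def IsWheel (S : Set Pt) (E : Set (Sym2 Pt)) : Prop :=
  ∃ c ∈ S, c ∈ interior (convexHull ℝ S) ∧
    (∀ p ∈ S, p ∈ interior (convexHull ℝ S) → p = c) ∧
    InConvexPos (S \ {c}) ∧
    E = {e | ∃ u ∈ S, ∃ v ∈ S, e = s(u, v) ∧ IsHullEdge S u v} ∪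
        {e | ∃ p ∈ S, p ≠ c ∧ e = s(c, p)}

/-- `{u,v,w}` is a *triangle* of the triangulation `(S,E)`. -/
def IsTriangleOf (S : Set Pt) (E : Set (Sym2 Pt)) (u v w : Pt) : Prop :=
  u ≠ v ∧ u ≠ w ∧ v ≠ w ∧ s(u, v) ∈ E ∧ s(v, w) ∈ E ∧ s(u, w) ∈ E ∧
  ∀ p ∈ S, p ∉ interior (convexHull ℝ ({u, v, w} : Set Pt))

/-- The edge `{u,v}` is *flippable* in the triangulation `(S,E)`. -/
def Flippable (S : Set Pt) (E : Set (Sym2 Pt)) (u v : Pt) : Prop :=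
  s(u, v) ∈ E ∧ ∃ w ∈ S, ∃ x ∈ S, IsTriangleOf S E u v w ∧ IsTriangleOf S E u v x ∧
    (openSegment ℝ u v ∩ openSegment ℝ w x).Nonempty

/-- A biplane graph is *maximal* if no proper edge-superset is biplane. -/
def IsMaximalBiplane (S : Set Pt) (E : Set (Sym2 Pt)) : Prop :=
  IsBiplaneGraph S E ∧ ∀ E'' : Set (Sym2 Pt), IsBiplaneGraph S E'' → ¬ E ⊂ E''



def sarea (a b p : Pt) : ℝ := (b.1 - a.1) * (p.2 - a.2) - (b.2 - a.2) * (p.1 - a.1)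

lemma sarea_self12 (a p : Pt) : sarea a a p = 0 := by unfold sarea; ring
lemma sarea_self13 (a b : Pt) : sarea a b a = 0 := by unfold sarea; ring
lemma sarea_self23 (a b : Pt) : sarea a b b = 0 := by unfold sarea; ring
lemma sarea_swap12 (a b p : Pt) : sarea b a p = - sarea a b p := by unfold sarea; ring
lemma sarea_swap23 (a b p : Pt) : sarea a p b = - sarea a b p := by unfold sarea; ring

lemma sarea_affine (u v p q : Pt) (α β : ℝ) (h : α + β = 1) :
    sarea u v (α • p + β • q) = α * sarea u v p + β * sarea u v q := by
  have hβ : β = 1 - α := by linarith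
  subst hβ
  simp only [sarea, Prod.smul_fst, Prod.smul_snd, Prod.fst_add, Prod.snd_add, smul_eq_mul]
  ring

lemma collinear_of_sarea_eq_zero {a b p : Pt} (hab : a ≠ b) (h : sarea a b p = 0) :
    Collinear ℝ ({a, b, p} : Set Pt) := by
  rw [collinear_iff_of_mem (Set.mem_insert a _)]
  refine ⟨b - a, ?_⟩
  intro x hx
  have key : ∀ x : Pt, x = a ∨ x = b ∨ x = p → ∃ r : ℝ, x = r • (b - a) +ᵥ a := by
    intro x hx
    have hab' : b.1 - a.1 ≠ 0 ∨ b.2 - a.2 ≠ 0 := by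
      by_contra hc
      push_neg at hc
      exact hab (Prod.ext_iff.mpr ⟨by linarith [hc.1], by linarith [hc.2]⟩)
    rcases hx with rfl | rfl | rfl
    · exact ⟨0, by simp⟩
    · refine ⟨1, ?_⟩
      simp [vadd_eq_add]
    · unfold sarea at h
      rcases hab' with h1 | h2
      · refine ⟨(x.1 - a.1)/(b.1 - a.1), ?_⟩
        rw [Prod.ext_iff]
        constructor
        · simp only [vadd_eq_add, Prod.smul_fst, Prod.fst_add, Prod.fst_sub, smul_eq_mul]
          field_simp
          ring
        · simp only [vadd_eq_add, Prod.smul_snd, Prod.snd_add, Prod.snd_sub, smul_eq_mul]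
          field_simp
          nlinarith [h]
      · refine ⟨(x.2 - a.2)/(b.2 - a.2), ?_⟩
        rw [Prod.ext_iff]
        constructor
        · simp only [vadd_eq_add, Prod.smul_fst, Prod.fst_add, Prod.fst_sub, smul_eq_mul]
          field_simp
          nlinarith [h]
        · simp only [vadd_eq_add, Prod.smul_snd, Prod.snd_add, Prod.snd_sub, smul_eq_mul]
          field_simp
          ring
  exact key x (by simpa using hx)


lemma sarea_ne_zero {S : Set Pt} (hconv : InConvexPos S) {a b p : Pt}
    (ha : a ∈ S) (hb : b ∈ S) (hp : p ∈ S) (hab : a ≠ b) (hap : a ≠ p) (hbp : b ≠ p) :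
    sarea a b p ≠ 0 := by
  intro h
  have hcol := collinear_of_sarea_eq_zero hab h
  have key : ∀ x y z : Pt, x ∈ S → y ∈ S → z ∈ S → x ≠ z → y ≠ z → Wbtw ℝ x z y → False := by
    intro x y z hx hy hz hxz hyz hw
    have hz' : z ∈ segment ℝ x y := mem_segment_iff_wbtw.mpr hw
    have : z ∈ convexHull ℝ (S \ {z}) := by
      apply convexHull_mono (show ({x, y} : Set Pt) ⊆ S \ {z} by
        intro w hw'
        rcases hw' with rfl | rfl
        · exact ⟨hx, by simp only [Set.mem_singleton_iff]; exact hxz⟩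
        · exact ⟨hy, by simp only [Set.mem_singleton_iff]; exact hyz⟩)
      rw [convexHull_pair]
      exact hz'
    exact hconv z hz this
  rcases hcol.wbtw_or_wbtw_or_wbtw with hw | hw | hw
  · exact key a p b ha hp hb hab hbp.symm hw
  · exact key b a p hb ha hp hbp hap hw
  · exact key p b a hp hb ha hap.symm hab.symm hw

/-- Two points strictly on opposite sides of the chord `ab`, all in convex position:
the open segments cross. -/
lemma crossing_lemma {S : Set Pt} (hconv : InConvexPos S) {a b c d : Pt}
    (ha : a ∈ S) (hb : b ∈ S) (hc : c ∈ S) (hd : d ∈ S)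
    (hcp : 0 < sarea a b c) (hdn : sarea a b d < 0) :
    ∃ z, z ∈ openSegment ℝ a b ∧ z ∈ openSegment ℝ c d := by
  have hab : a ≠ b := by
    rintro rfl; rw [sarea_self12] at hcp; exact lt_irrefl _ hcp
  have hca : c ≠ a := by rintro rfl; rw [sarea_self13] at hcp; exact lt_irrefl _ hcp
  have hcb : c ≠ b := by rintro rfl; rw [sarea_self23] at hcp; exact lt_irrefl _ hcp
  have hda : d ≠ a := by rintro rfl; rw [sarea_self13] at hdn; exact lt_irrefl _ hdn
  have hdb : d ≠ b := by rintro rfl; rw [sarea_self23] at hdn; exact lt_irrefl _ hdn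
  set sc := sarea a b c with hsc
  set sd := sarea a b d with hsd
  have hden : 0 < sc - sd := by linarith
  set t : ℝ := sc / (sc - sd) with ht
  have ht0 : 0 < t := div_pos hcp hden
  have ht1 : t < 1 := (div_lt_one hden).mpr (by linarith)
  set z : Pt := (1 - t) • c + t • d with hz
  have hzcd : z ∈ openSegment ℝ c d := ⟨1 - t, t, by linarith, ht0, by ring, rfl⟩
  have htt : t * (sc - sd) = sc := by
    rw [ht]; field_simp
  have hz0 : sarea a b z = 0 := by
    rw [hz, sarea_affine a b c d (1-t) t (by ring)]
    linear_combination -htt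
  have hzseg : z ∈ segment ℝ c d := openSegment_subset_segment ℝ c d hzcd
  have hzhull : z ∈ convexHull ℝ ({c, d} : Set Pt) := by
    rw [convexHull_pair]; exact hzseg
  have hab' : b.1 - a.1 ≠ 0 ∨ b.2 - a.2 ≠ 0 := by
    by_contra hcon
    push_neg at hcon
    exact hab (Prod.ext_iff.mpr ⟨by linarith [hcon.1], by linarith [hcon.2]⟩)
  have hex : ∃ s : ℝ, z = (1 - s) • a + s • b := by
    unfold sarea at hz0
    rcases hab' with h1 | h2
    · refine ⟨(z.1 - a.1)/(b.1 - a.1), ?_⟩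
      rw [Prod.ext_iff]
      constructor
      · simp only [Prod.smul_fst, Prod.fst_add, smul_eq_mul]
        field_simp <;> ring
      · simp only [Prod.smul_snd, Prod.snd_add, smul_eq_mul]
        field_simp
        nlinarith [hz0]
    · refine ⟨(z.2 - a.2)/(b.2 - a.2), ?_⟩
      rw [Prod.ext_iff]
      constructor
      · simp only [Prod.smul_fst, Prod.fst_add, smul_eq_mul]
        field_simp
        nlinarith [hz0]
      · simp only [Prod.smul_snd, Prod.snd_add, smul_eq_mul]
        field_simp <;> ring
  obtain ⟨s, hzs⟩ := hex
  have hcd_sub : ∀ x : Pt, x ≠ c → x ≠ d → ({c, d} : Set Pt) ⊆ S \ {x} := by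
    intro x hxc hxd w hw
    rcases hw with rfl | rfl
    · exact ⟨hc, by simp only [Set.mem_singleton_iff]; exact fun h => hxc h.symm⟩
    · exact ⟨hd, by simp only [Set.mem_singleton_iff]; exact fun h => hxd h.symm⟩
  rcases lt_trichotomy s 0 with hs | hs | hs
  · -- a strictly between z and b : contradiction
    exfalso
    have h1s : 0 < 1 - s := by linarith
    have haeq : a = (1/(1-s)) • z + (-s/(1-s)) • b := by
      rw [hzs]
      rw [Prod.ext_iff]
      constructor
      · simp only [Prod.smul_fst, Prod.fst_add, smul_eq_mul]
        field_simp <;> ring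
      · simp only [Prod.smul_snd, Prod.snd_add, smul_eq_mul]
        field_simp <;> ring
    have hmem : a ∈ segment ℝ z b :=
      ⟨1/(1-s), -s/(1-s), by positivity, (div_pos (by linarith : (0:ℝ) < -s) h1s).le,
        by field_simp <;> ring, haeq.symm⟩
    have hzin : z ∈ convexHull ℝ ({c, d, b} : Set Pt) := by
      refine convexHull_mono ?_ hzhull
      intro w hw
      simp only [Set.mem_insert_iff, Set.mem_singleton_iff] at hw ⊢
      tauto
    have hhull : segment ℝ z b ⊆ convexHull ℝ ({c, d, b} : Set Pt) :=
      (convex_convexHull ℝ _).segment_subset hzin (subset_convexHull ℝ _ (by simp))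
    have hsub : ({c, d, b} : Set Pt) ⊆ S \ {a} := by
      intro w hw
      rcases hw with rfl | rfl | rfl
      · exact ⟨hc, by simp only [Set.mem_singleton_iff]; exact hca⟩
      · exact ⟨hd, by simp only [Set.mem_singleton_iff]; exact hda⟩
      · exact ⟨hb, by simp only [Set.mem_singleton_iff]; exact hab.symm⟩
    exact hconv a ha (convexHull_mono hsub (hhull hmem))
  · -- s = 0 : z = a
    exfalso
    subst hs
    simp only [sub_zero, one_smul, zero_smul, add_zero] at hzs
    apply hconv a ha
    apply convexHull_mono (hcd_sub a hca.symm hda.symm)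
    rw [← hzs]
    exact hzhull
  · rcases lt_trichotomy s 1 with hs1 | hs1 | hs1
    · exact ⟨z, ⟨1 - s, s, by linarith, hs, by ring, hzs.symm⟩, hzcd⟩
    · -- s = 1 : z = b
      exfalso
      subst hs1
      simp only [sub_self, zero_smul, one_smul, zero_add] at hzs
      apply hconv b hb
      apply convexHull_mono (hcd_sub b hcb.symm hdb.symm)
      rw [← hzs]
      exact hzhull
    · -- b strictly between a and z
      exfalso
      have hs0 : s ≠ 0 := by linarith
      have hbeq : b = (1 - 1/s) • a + (1/s) • z := by
        rw [hzs]
        rw [Prod.ext_iff]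
        constructor
        · simp only [Prod.smul_fst, Prod.fst_add, smul_eq_mul]
          field_simp
          ring
        · simp only [Prod.smul_snd, Prod.snd_add, smul_eq_mul]
          field_simp
          ring
      have h1s : 0 < 1 - 1/s := by
        have : 1/s < 1 := by rw [div_lt_one (by linarith)]; linarith
        linarith
      have hmem : b ∈ segment ℝ a z :=
        ⟨1 - 1/s, 1/s, le_of_lt h1s, by positivity, by ring, hbeq.symm⟩
      have hzin : z ∈ convexHull ℝ ({c, d, a} : Set Pt) := by
        refine convexHull_mono ?_ hzhull
        intro w hw
        simp only [Set.mem_insert_iff, Set.mem_singleton_iff] at hw ⊢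
        tauto
      have hhull : segment ℝ a z ⊆ convexHull ℝ ({c, d, a} : Set Pt) :=
        (convex_convexHull ℝ _).segment_subset (subset_convexHull ℝ _ (by simp)) hzin
      have hsub : ({c, d, a} : Set Pt) ⊆ S \ {b} := by
        intro w hw
        rcases hw with rfl | rfl | rfl
        · exact ⟨hc, by simp only [Set.mem_singleton_iff]; exact hcb⟩
        · exact ⟨hd, by simp only [Set.mem_singleton_iff]; exact hdb⟩
        · exact ⟨ha, by simp only [Set.mem_singleton_iff]; exact hab⟩
      exact hconv b hb (convexHull_mono hsub (hhull hmem))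

lemma eval_open_pos {u v p q z : Pt} (hz : z ∈ openSegment ℝ p q)
    (h1 : 0 ≤ sarea u v p) (h2 : 0 ≤ sarea u v q)
    (h3 : 0 < sarea u v p ∨ 0 < sarea u v q) : 0 < sarea u v z := by
  obtain ⟨α, β, hα, hβ, hαβ, hzeq⟩ := hz
  rw [← hzeq, sarea_affine u v p q α β hαβ]
  rcases h3 with h | h
  · nlinarith
  · nlinarith

lemma eval_open_nonpos {u v p q z : Pt} (hz : z ∈ openSegment ℝ p q)
    (h1 : sarea u v p ≤ 0) (h2 : sarea u v q ≤ 0) : sarea u v z ≤ 0 := by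
  obtain ⟨α, β, hα, hβ, hαβ, hzeq⟩ := hz
  rw [← hzeq, sarea_affine u v p q α β hαβ]
  nlinarith

/-- If `q, r` are strictly on the positive side of `ab`, then `a, b` are not strictly
separated by the line `qr`. -/
lemma same_side_lemma {S : Set Pt} (hconv : InConvexPos S) {a b q r : Pt}
    (ha : a ∈ S) (hb : b ∈ S) (hq : q ∈ S) (hr : r ∈ S)
    (h1 : 0 < sarea a b q) (h2 : 0 < sarea a b r) :
    ¬ (0 < sarea q r a ∧ sarea q r b < 0) := by
  rintro ⟨p1, p2⟩
  obtain ⟨z, hz1, hz2⟩ := crossing_lemma hconv hq hr ha hb p1 p2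
  -- z ∈ open (q,r) and z ∈ open (a,b)
  have hpos : 0 < sarea a b z := eval_open_pos hz1 h1.le h2.le (Or.inl h1)
  have hzero : sarea a b z ≤ 0 :=
    eval_open_nonpos hz2 (le_of_eq (sarea_self13 a b)) (le_of_eq (sarea_self23 a b))
  linarith

/-- Master configuration lemma: impossible sign pattern for points in convex position. -/
lemma master_lemma {S : Set Pt} (hconv : InConvexPos S) {a b q r x : Pt}
    (ha : a ∈ S) (hb : b ∈ S) (hq : q ∈ S) (hr : r ∈ S) (hx : x ∈ S)
    (h1 : 0 < sarea a b x) (h2 : sarea a b q ≤ 0) (h3 : sarea a b r ≤ 0)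
    (h4 : 0 < sarea q r x) (h5 : sarea q r a ≤ 0) (h6 : sarea q r b ≤ 0)
    (hqr : (q ≠ a ∧ q ≠ b) ∨ (r ≠ a ∧ r ≠ b)) : False := by
  have hab : a ≠ b := by
    rintro rfl; rw [sarea_self12] at h1; exact lt_irrefl _ h1
  have hxa : x ≠ a := by rintro rfl; rw [sarea_self13] at h1; exact lt_irrefl _ h1
  have hxb : x ≠ b := by rintro rfl; rw [sarea_self23] at h1; exact lt_irrefl _ h1
  have hqr' : q ≠ r := by
    rintro rfl; rw [sarea_self12] at h4; exact lt_irrefl _ h4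
  have hxq : x ≠ q := by rintro rfl; rw [sarea_self13] at h4; exact lt_irrefl _ h4
  have hxr : x ≠ r := by rintro rfl; rw [sarea_self23] at h4; exact lt_irrefl _ h4
  -- find w ∈ {q, r} with sarea a b w < 0
  have hw : ∃ w, w ∈ S ∧ sarea a b w < 0 ∧ sarea q r w = 0 ∧ w ≠ x := by
    rcases hqr with ⟨hqa, hqb⟩ | ⟨hra, hrb⟩
    · refine ⟨q, hq, ?_, sarea_self13 q r, Ne.symm hxq⟩
      rcases lt_or_eq_of_le h2 with h | h
      · exact h
      · exact absurd h (sarea_ne_zero hconv ha hb hq hab (Ne.symm hqa) (Ne.symm hqb))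
    · refine ⟨r, hr, ?_, sarea_self23 q r, Ne.symm hxr⟩
      rcases lt_or_eq_of_le h3 with h | h
      · exact h
      · exact absurd h (sarea_ne_zero hconv ha hb hr hab (Ne.symm hra) (Ne.symm hrb))
  obtain ⟨w, hwS, hwneg, hwline, hwx⟩ := hw
  obtain ⟨z, hz1, hz2⟩ := crossing_lemma hconv ha hb hx hwS h1 hwneg
  have hp : 0 < sarea q r z := eval_open_pos hz2 h4.le (le_of_eq hwline.symm) (Or.inl h4)
  have hn : sarea q r z ≤ 0 := eval_open_nonpos hz1 h5 h6
  linarith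



lemma openSeg_mk (x y : Pt) : openSeg s(x, y) = openSegment ℝ x y := rfl

def posSide (S : Set Pt) (a b : Pt) : Set Pt := {p ∈ S | 0 < sarea a b p}

def IsDiagOf (S : Set Pt) (e : Sym2 Pt) : Prop :=
  ∃ a b : Pt, e = s(a, b) ∧ a ∈ S ∧ b ∈ S ∧
    (posSide S a b).Nonempty ∧ (posSide S b a).Nonempty

lemma diag_of_rep {S : Set Pt} {e : Sym2 Pt} {a b : Pt} (h : IsDiagOf S e)
    (heq : e = s(a, b)) :
    a ∈ S ∧ b ∈ S ∧ (posSide S a b).Nonempty ∧ (posSide S b a).Nonempty := by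
  obtain ⟨u, v, huv, hu, hv, h1, h2⟩ := h
  rw [heq] at huv
  rcases Sym2.eq_iff.mp huv with ⟨rfl, rfl⟩ | ⟨rfl, rfl⟩
  · exact ⟨hu, hv, h1, h2⟩
  · exact ⟨hv, hu, h2, h1⟩

lemma InConvexPos.mono {S T : Set Pt} (h : InConvexPos S) (hT : T ⊆ S) : InConvexPos T := by
  intro p hp hcon
  exact h p (hT hp) (convexHull_mono (by intro x hx; exact ⟨hT hx.1, hx.2⟩) hcon)

lemma posSide_diff (S P : Set Pt) (u v : Pt) :
    posSide (S \ P) u v = posSide S u v \ P := by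
  ext x
  simp only [posSide, Set.mem_setOf_eq, Set.mem_diff, Set.mem_sep_iff]
  tauto

lemma diag_bound : ∀ n : ℕ, ∀ S : Set Pt, S.Finite → S.ncard = n → InConvexPos S →
    ∀ D : Set (Sym2 Pt), (∀ e ∈ D, IsDiagOf S e) →
    (∀ e ∈ D, ∀ f ∈ D, e ≠ f → ¬ Cross e f) → D.Nonempty → D.ncard + 3 ≤ n := by
  intro n
  induction n using Nat.strong_induction_on with
  | _ n IH =>
  intro S hfin hn hconv D hD hNC hne
  classical
  have hDfin : D.Finite := by
    apply Set.Finite.subset (Set.Finite.image (Function.uncurry Sym2.mk) (hfin.prod hfin))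
    intro e he
    obtain ⟨u, v, rfl, hu, hv, -, -⟩ := hD e he
    exact ⟨(u, v), ⟨hu, hv⟩, rfl⟩
  -- choose a diagonal with minimal nonempty side
  set F : Set (Set Pt) :=
    {P | P.Nonempty ∧ ∃ u v : Pt, s(u, v) ∈ D ∧ P = posSide S u v} with hF
  have hFne : F.Nonempty := by
    obtain ⟨e, he⟩ := hne
    obtain ⟨u, v, rfl, hu, hv, h1, h2⟩ := hD e he
    exact ⟨posSide S u v, h1, u, v, he, rfl⟩
  obtain ⟨P, hPF, hPcard⟩ : ∃ P ∈ F, P.ncard = sInf (Set.ncard '' F) := by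
    have := Nat.sInf_mem (hFne.image Set.ncard)
    obtain ⟨P, hPF, hP⟩ := this
    exact ⟨P, hPF, hP⟩
  have hmin : ∀ Q ∈ F, P.ncard ≤ Q.ncard := by
    intro Q hQ
    rw [hPcard]
    exact Nat.sInf_le ⟨Q, hQ, rfl⟩
  obtain ⟨hPne, a, b, heD, hPdef⟩ := hPF
  obtain ⟨haS, hbS, hside1, hside2⟩ := diag_of_rep (hD _ heD) rfl
  have hab : a ≠ b := by
    obtain ⟨p, -, hp⟩ := hside1
    rintro rfl
    rw [sarea_self12] at hp
    exact lt_irrefl _ hp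
  have hPS : P ⊆ S := by rw [hPdef]; exact fun x hx => hx.1
  have hPfin : P.Finite := hfin.subset hPS
  have haP : a ∉ P := by
    rw [hPdef]; rintro ⟨-, h⟩; rw [sarea_self13] at h; exact lt_irrefl _ h
  have hbP : b ∉ P := by
    rw [hPdef]; rintro ⟨-, h⟩; rw [sarea_self23] at h; exact lt_irrefl _ h
  -- the SUB minimality machine
  have hsub : ∀ u v : Pt, s(u, v) ∈ D → u ∈ S → v ∈ S →
      0 ≤ sarea a b u → 0 ≤ sarea a b v → sarea u v a ≤ 0 → sarea u v b ≤ 0 →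
      ((u ≠ a ∧ u ≠ b) ∨ (v ≠ a ∧ v ≠ b)) → (posSide S u v).Nonempty →
      (u ∈ P ∨ v ∈ P) → False := by
    intro u v hfD huS hvS h2' h3' h5' h6' hqr hWne hwP
    have hWP : posSide S u v ⊆ P := by
      intro x hxW
      obtain ⟨hxS, hxpos⟩ := hxW
      have hxa : x ≠ a := by rintro rfl; linarith
      have hxb : x ≠ b := by rintro rfl; linarith
      rw [hPdef]
      refine ⟨hxS, ?_⟩
      by_contra hcon
      push_neg at hcon
      have hxne := sarea_ne_zero hconv haS hbS hxS hab (Ne.symm hxa) (Ne.symm hxb)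
      have hneg : sarea a b x < 0 := lt_of_le_of_ne hcon hxne
      refine master_lemma hconv hbS haS huS hvS hxS ?_ ?_ ?_ hxpos h6' h5' (by tauto)
      · rw [sarea_swap12]; linarith
      · rw [sarea_swap12]; linarith
      · rw [sarea_swap12]; linarith
    have hWF : posSide S u v ∈ F := ⟨hWne, u, v, hfD, rfl⟩
    have hle := hmin _ hWF
    have hss : posSide S u v ⊂ P := by
      refine ⟨hWP, fun hPW => ?_⟩
      rcases hwP with hw | hw
      · obtain ⟨-, h⟩ := hPW hw
        rw [sarea_self13] at h; exact lt_irrefl _ h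
      · obtain ⟨-, h⟩ := hPW hw
        rw [sarea_self23] at h; exact lt_irrefl _ h
    have := Set.ncard_lt_ncard hss hPfin
    omega
  -- Claim 1 : no other diagonal has an endpoint in P
  have hC1 : ∀ u v : Pt, s(u, v) ∈ D → s(u, v) ≠ s(a, b) → u ∉ P := by
    intro u v hfD hne' huP
    obtain ⟨huS, hvS, hs1, hs2⟩ := diag_of_rep (hD _ hfD) rfl
    have hupos : 0 < sarea a b u := (hPdef ▸ huP).2
    have huv : u ≠ v := by
      obtain ⟨p, -, hp⟩ := hs1
      rintro rfl; rw [sarea_self12] at hp; exact lt_irrefl _ hp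
    have hua : u ≠ a := by rintro rfl; rw [sarea_self13] at hupos; exact lt_irrefl _ hupos
    have hub : u ≠ b := by rintro rfl; rw [sarea_self23] at hupos; exact lt_irrefl _ hupos
    have hswapD : s(v, u) ∈ D := by rw [Sym2.eq_swap]; exact hfD
    by_cases hva : v = a
    · subst hva
      have hnz := sarea_ne_zero hconv huS haS hbS huv hub hab
      rcases hnz.lt_or_gt with hlt | hgt
      · exact hsub u v hfD huS haS hupos.le (le_of_eq (sarea_self13 v b).symm)
          (le_of_eq (sarea_self23 u v)) hlt.le (Or.inl ⟨hua, hub⟩) hs1 (Or.inl huP)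
      · refine hsub v u hswapD haS huS (le_of_eq (sarea_self13 v b).symm) hupos.le
          (le_of_eq (sarea_self13 v u)) ?_ (Or.inr ⟨hua, hub⟩) hs2 (Or.inr huP)
        rw [sarea_swap12]; linarith
    · by_cases hvb : v = b
      · subst hvb
        have hnz := sarea_ne_zero hconv huS hvS haS huv hua hab.symm
        rcases hnz.lt_or_gt with hlt | hgt
        · exact hsub u v hfD huS hvS hupos.le (le_of_eq (sarea_self23 a v).symm)
            hlt.le (le_of_eq (sarea_self23 u v)) (Or.inl ⟨hua, hub⟩) hs1 (Or.inl huP)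
        · refine hsub v u hswapD hvS huS (le_of_eq (sarea_self23 a v).symm) hupos.le ?_
            (le_of_eq (sarea_self13 v u)) (Or.inr ⟨hua, hub⟩) hs2 (Or.inr huP)
          rw [sarea_swap12]; linarith
      · have hsv := sarea_ne_zero hconv haS hbS hvS hab (fun h => hva h.symm) (fun h => hvb h.symm)
        rcases hsv.lt_or_gt with hlt | hgt
        · -- v on negative side : crossing, contradiction
          obtain ⟨z, hz1, hz2⟩ := crossing_lemma hconv haS hbS huS hvS hupos hlt
          exact hNC _ heD _ hfD (Ne.symm hne') ⟨z, hz1, hz2⟩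
        · -- both u v on positive side
          have hna := sarea_ne_zero hconv huS hvS haS huv hua hva
          have hnb := sarea_ne_zero hconv huS hvS hbS huv hub hvb
          have hss1 := same_side_lemma hconv haS hbS huS hvS hupos hgt
          have hss2 := same_side_lemma hconv haS hbS hvS huS hgt hupos
          rcases hna.lt_or_gt with hlta | hgta
          · have hble : sarea u v b ≤ 0 := by
              by_contra hcon
              push_neg at hcon
              apply hss2
              constructor
              · rw [sarea_swap12]; linarith
              · rw [sarea_swap12]; linarith
            exact hsub u v hfD huS hvS hupos.le hgt.le hlta.le hble
              (Or.inl ⟨hua, hub⟩) hs1 (Or.inl huP)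
          · have hble : sarea v u b ≤ 0 := by
              by_contra hcon
              push_neg at hcon
              apply hss1
              constructor
              · linarith
              · rw [sarea_swap12] at hcon; linarith
            refine hsub v u hswapD hvS huS hgt.le hupos.le ?_ hble
              (Or.inr ⟨hua, hub⟩) hs2 (Or.inr huP)
            rw [sarea_swap12]; linarith
  -- Claim 2 : for other diagonals, each side survives the removal of P
  have hC2 : ∀ u v : Pt, s(u, v) ∈ D → s(u, v) ≠ s(a, b) →
      (posSide S u v \ P).Nonempty := by
    intro u v hfD hne'
    obtain ⟨huS, hvS, hs1, hs2⟩ := diag_of_rep (hD _ hfD) rfl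
    rw [Set.nonempty_iff_ne_empty]
    intro hcon
    have hsubP : posSide S u v ⊆ P := Set.diff_eq_empty.mp hcon
    obtain ⟨x, hxS, hxpos⟩ := hs1
    have hxP := hsubP ⟨hxS, hxpos⟩
    have hxab : 0 < sarea a b x := (hPdef ▸ hxP).2
    have huv : u ≠ v := by
      rintro rfl; rw [sarea_self12] at hxpos; exact lt_irrefl _ hxpos
    have huP : u ∉ P := hC1 u v hfD hne'
    have hvP : v ∉ P := hC1 v u (by rw [Sym2.eq_swap]; exact hfD)
      (by rw [Sym2.eq_swap]; exact hne')
    have hule : sarea a b u ≤ 0 := by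
      by_contra hcon2; push_neg at hcon2
      exact huP (hPdef ▸ ⟨huS, hcon2⟩)
    have hvle : sarea a b v ≤ 0 := by
      by_contra hcon2; push_neg at hcon2
      exact hvP (hPdef ▸ ⟨hvS, hcon2⟩)
    have hale : sarea u v a ≤ 0 := by
      by_contra hcon2; push_neg at hcon2
      exact haP (hsubP ⟨haS, hcon2⟩)
    have hble : sarea u v b ≤ 0 := by
      by_contra hcon2; push_neg at hcon2
      exact hbP (hsubP ⟨hbS, hcon2⟩)
    have hqrne : (u ≠ a ∧ u ≠ b) ∨ (v ≠ a ∧ v ≠ b) := by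
      by_contra hcon2
      push_neg at hcon2
      obtain ⟨h1, h2⟩ := hcon2
      by_cases hua : u = a
      · by_cases hvb2 : v = b
        · exact hne' (by rw [hua, hvb2])
        · have hva : v = a := by
            by_contra hva
            exact hvb2 (h2 hva)
          exact huv (by rw [hua, hva])
      · have hub : u = b := h1 hua
        by_cases hva : v = a
        · exact hne' (by rw [hub, hva, Sym2.eq_swap])
        · have hvb2 : v = b := h2 hva
          exact huv (by rw [hub, hvb2])
    exact master_lemma hconv haS hbS huS hvS hxS hxab hule hvle hxpos hale hble hqrne
  -- split on whether other diagonals exist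
  by_cases hD' : (D \ {s(a, b)}).Nonempty
  · -- recursive case
    have hPos : 1 ≤ P.ncard := by
      rw [Nat.one_le_iff_ne_zero]
      intro h
      exact hPne.ne_empty ((Set.ncard_eq_zero hPfin).mp h)
    have hPle : P.ncard ≤ S.ncard := Set.ncard_le_ncard hPS hfin
    have hSfin' : (S \ P).Finite := hfin.diff
    have hdcard : (S \ P).ncard = S.ncard - P.ncard := Set.ncard_diff hPS hPfin
    have hlt : (S \ P).ncard < n := by omega
    have hrec := IH _ hlt (S \ P) hSfin' rfl (hconv.mono Set.diff_subset)
      (D \ {s(a, b)})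
      (by
        intro e he
        obtain ⟨heD', hene⟩ := he
        obtain ⟨u, v, rfl, huS, hvS, -, -⟩ := hD e heD'
        have hene' : s(u, v) ≠ s(a, b) := by simpa using hene
        refine ⟨u, v, rfl, ⟨huS, hC1 u v heD' hene'⟩,
          ⟨hvS, hC1 v u (by rw [Sym2.eq_swap]; exact heD')
            (by rw [Sym2.eq_swap]; exact hene')⟩, ?_, ?_⟩
        · rw [posSide_diff]
          exact hC2 u v heD' hene'
        · rw [posSide_diff]
          exact hC2 v u (by rw [Sym2.eq_swap]; exact heD')
            (by rw [Sym2.eq_swap]; exact hene'))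
      (fun e he f hf hef => hNC e he.1 f hf.1 hef) hD'
    have hcount : (D \ {s(a, b)}).ncard + 1 = D.ncard :=
      Set.ncard_diff_singleton_add_one heD hDfin
    omega
  · -- D = {s(a,b)} : need |S| ≥ 4
    have hDsub : D ⊆ {s(a, b)} := by
      intro e he
      by_contra hne2
      exact hD' ⟨e, he, hne2⟩
    have hDeq : D = {s(a, b)} := Set.eq_singleton_iff_nonempty_unique_mem.mpr
      ⟨hne, fun e he => hDsub he⟩
    obtain ⟨p, hpS, hppos⟩ := hside1
    obtain ⟨p', hp'S, hp'pos⟩ := hside2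
    have hp'neg : sarea a b p' < 0 := by rw [sarea_swap12] at hp'pos; linarith
    have hpa : p ≠ a := by rintro rfl; rw [sarea_self13] at hppos; exact lt_irrefl _ hppos
    have hpb : p ≠ b := by rintro rfl; rw [sarea_self23] at hppos; exact lt_irrefl _ hppos
    have hp'a : p' ≠ a := by rintro rfl; rw [sarea_self13] at hp'neg; exact lt_irrefl _ hp'neg
    have hp'b : p' ≠ b := by rintro rfl; rw [sarea_self23] at hp'neg; exact lt_irrefl _ hp'neg
    have hpp' : p ≠ p' := by rintro rfl; linarith
    have hsub4 : ({a, b, p, p'} : Set Pt) ⊆ S := by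
      intro w hw
      rcases hw with rfl | rfl | rfl | rfl
      · exact haS
      · exact hbS
      · exact hpS
      · exact hp'S
    have hcard4 : ({a, b, p, p'} : Set Pt).ncard = 4 := by
      rw [Set.ncard_insert_of_notMem (by simp [hab, Ne.symm hpa, Ne.symm hp'a]) (Set.toFinite _),
        Set.ncard_insert_of_notMem (by simp [Ne.symm hpb, Ne.symm hp'b]) (Set.toFinite _),
        Set.ncard_pair hpp']
    have h4 : 4 ≤ S.ncard := by
      rw [← hcard4]
      exact Set.ncard_le_ncard hsub4 hfin
    rw [hDeq, Set.ncard_singleton]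
    omega






lemma isHullEdge_iff (S : Set Pt) (u v : Pt) : IsHullEdge S u v ↔
    u ≠ v ∧ ((∀ p ∈ S \ {u, v}, 0 < sarea u v p) ∨ (∀ p ∈ S \ {u, v}, sarea u v p < 0)) :=
  Iff.rfl

lemma isHullEdge_symm {S : Set Pt} {u v : Pt} (h : IsHullEdge S u v) : IsHullEdge S v u := by
  rw [isHullEdge_iff] at h ⊢
  obtain ⟨hne, h2⟩ := h
  refine ⟨hne.symm, ?_⟩
  have hpair : S \ {v, u} = S \ {u, v} := by rw [Set.pair_comm]
  rcases h2 with h | h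
  · right
    intro p hp
    rw [sarea_swap12]
    have := h p (hpair ▸ hp)
    linarith
  · left
    intro p hp
    rw [sarea_swap12]
    have := h p (hpair ▸ hp)
    linarith

lemma edge_rep {S : Set Pt} {E : Set (Sym2 Pt)} (hE : IsEdgeSetOn S E) :
    ∀ e ∈ E, ∃ u v : Pt, e = s(u, v) ∧ u ≠ v ∧ u ∈ S ∧ v ∈ S := by
  intro e he
  induction e using Sym2.ind with
  | _ u v =>
    refine ⟨u, v, rfl, ?_, (hE _ he).2 u (Sym2.mem_mk_left u v), (hE _ he).2 v (Sym2.mem_mk_right u v)⟩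
    intro h
    exact (hE _ he).1 (by rw [h]; exact Sym2.mk_isDiag_iff.mpr rfl)

lemma edge_classify {S : Set Pt} (hconv : InConvexPos S) {u v : Pt}
    (huv : u ≠ v) (hu : u ∈ S) (hv : v ∈ S) :
    IsHullEdge S u v ∨ IsDiagOf S s(u, v) := by
  by_cases h1 : (posSide S u v).Nonempty
  · by_cases h2 : (posSide S v u).Nonempty
    · exact Or.inr ⟨u, v, rfl, hu, hv, h1, h2⟩
    · -- all points strictly positive
      left
      rw [isHullEdge_iff]
      refine ⟨huv, Or.inl ?_⟩
      intro p hp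
      obtain ⟨hpS, hpne⟩ := hp
      have hpu : u ≠ p := fun h => hpne (by simp [← h])
      have hpv : v ≠ p := fun h => hpne (by simp [← h])
      have hnz := sarea_ne_zero hconv hu hv hpS huv hpu hpv
      rcases hnz.lt_or_gt with hlt | hgt
      · exact absurd ⟨hpS, by rw [sarea_swap12]; linarith⟩ (fun hh => h2 ⟨p, hh⟩)
      · exact hgt
  · left
    rw [isHullEdge_iff]
    refine ⟨huv, Or.inr ?_⟩
    intro p hp
    obtain ⟨hpS, hpne⟩ := hp
    have hpu : u ≠ p := fun h => hpne (by simp [← h])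
    have hpv : v ≠ p := fun h => hpne (by simp [← h])
    have hnz := sarea_ne_zero hconv hu hv hpS huv hpu hpv
    rcases hnz.lt_or_gt with hlt | hgt
    · exact hlt
    · exact absurd ⟨hpS, hgt⟩ (fun hh => h1 ⟨p, hh⟩)

lemma hull_three {S : Set Pt} {w t1 t2 t3 : Pt}
    (h1S : t1 ∈ S) (h2S : t2 ∈ S) (h3S : t3 ∈ S)
    (hw1 : w ≠ t1) (hw2 : w ≠ t2) (hw3 : w ≠ t3)
    (h12 : t1 ≠ t2) (h13 : t1 ≠ t3) (h23 : t2 ≠ t3)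
    (hh1 : IsHullEdge S w t1) (hh2 : IsHullEdge S w t2) (hh3 : IsHullEdge S w t3) : False := by
  rw [isHullEdge_iff] at hh1 hh2 hh3
  have hm12 : t2 ∈ S \ {w, t1} := ⟨h2S, by simp [Ne.symm hw2, Ne.symm h12]⟩
  have hm13 : t3 ∈ S \ {w, t1} := ⟨h3S, by simp [Ne.symm hw3, Ne.symm h13]⟩
  have hm21 : t1 ∈ S \ {w, t2} := ⟨h1S, by simp [Ne.symm hw1, h12]⟩
  have hm23 : t3 ∈ S \ {w, t2} := ⟨h3S, by simp [Ne.symm hw3, Ne.symm h23]⟩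
  have hm31 : t1 ∈ S \ {w, t3} := ⟨h1S, by simp [Ne.symm hw1, h13]⟩
  have hm32 : t2 ∈ S \ {w, t3} := ⟨h2S, by simp [Ne.symm hw2, h23]⟩
  have e21 : sarea w t2 t1 = - sarea w t1 t2 := sarea_swap23 w t1 t2
  have e31 : sarea w t3 t1 = - sarea w t1 t3 := sarea_swap23 w t1 t3
  have e32 : sarea w t3 t2 = - sarea w t2 t3 := sarea_swap23 w t2 t3
  have P1 : 0 < sarea w t1 t2 * sarea w t1 t3 := by
    rcases hh1.2 with h | h
    · exact mul_pos (h t2 hm12) (h t3 hm13)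
    · exact mul_pos_of_neg_of_neg (h t2 hm12) (h t3 hm13)
  have P2 : 0 < (- sarea w t1 t2) * sarea w t2 t3 := by
    rcases hh2.2 with h | h
    · have ha := h t1 hm21; have hb := h t3 hm23
      rw [e21] at ha
      exact mul_pos ha hb
    · have ha := h t1 hm21; have hb := h t3 hm23
      rw [e21] at ha
      exact mul_pos_of_neg_of_neg ha hb
  have P3 : 0 < (- sarea w t1 t3) * (- sarea w t2 t3) := by
    rcases hh3.2 with h | h
    · have ha := h t1 hm31; have hb := h t2 hm32
      rw [e31] at ha; rw [e32] at hb
      exact mul_pos ha hb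
    · have ha := h t1 hm31; have hb := h t2 hm32
      rw [e31] at ha; rw [e32] at hb
      exact mul_pos_of_neg_of_neg ha hb
  nlinarith [mul_pos P1 P3, mul_nonneg P2.le (sq_nonneg (sarea w t1 t3))]

open Classical in
lemma fiber_eq_two {S : Set Pt} (hfin : S.Finite) {u v : Pt}
    (huv : u ≠ v) (hu : u ∈ S) (hv : v ∈ S) :
    (hfin.toFinset.filter (fun x => x ∈ s(u, v))).card = 2 := by
  have heq : hfin.toFinset.filter (fun x => x ∈ s(u, v)) = {u, v} := by
    ext x
    simp only [Finset.mem_filter, Set.Finite.mem_toFinset, Sym2.mem_iff,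
      Finset.mem_insert, Finset.mem_singleton]
    constructor
    · rintro ⟨-, h⟩; exact h
    · rintro (rfl | rfl)
      · exact ⟨hu, Or.inl rfl⟩
      · exact ⟨hv, Or.inr rfl⟩
  rw [heq]
  exact Finset.card_pair huv

open Classical in
lemma double_count {S : Set Pt} (hfin : S.Finite) {A : Set (Sym2 Pt)} (hAfin : A.Finite)
    (hA : ∀ e ∈ A, ∃ u v : Pt, e = s(u, v) ∧ u ≠ v ∧ u ∈ S ∧ v ∈ S) :
    ∑ x ∈ hfin.toFinset, (hAfin.toFinset.filter (fun e => x ∈ e)).card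
      = 2 * hAfin.toFinset.card := by
  calc ∑ x ∈ hfin.toFinset, (hAfin.toFinset.filter (fun e => x ∈ e)).card
      = ∑ x ∈ hfin.toFinset, ∑ e ∈ hAfin.toFinset, if x ∈ e then 1 else 0 := by
        exact Finset.sum_congr rfl fun x _ => Finset.card_filter _ _
    _ = ∑ e ∈ hAfin.toFinset, ∑ x ∈ hfin.toFinset, if x ∈ e then 1 else 0 := Finset.sum_comm
    _ = ∑ e ∈ hAfin.toFinset, 2 := by
        refine Finset.sum_congr rfl fun e he => ?_
        rw [← Finset.card_filter]
        obtain ⟨u, v, rfl, huv, hu, hv⟩ := hA e (hAfin.mem_toFinset.mp he)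
        exact fiber_eq_two hfin huv hu hv
    _ = 2 * hAfin.toFinset.card := by rw [Finset.sum_const, smul_eq_mul, mul_comm]

lemma hull_mem_rep {S : Set Pt} {e : Sym2 Pt} {x : Pt}
    (he : ∃ u v : Pt, e = s(u, v) ∧ IsHullEdge S u v) (hx : x ∈ e) :
    ∃ t : Pt, e = s(x, t) ∧ IsHullEdge S x t := by
  obtain ⟨u, v, rfl, hh⟩ := he
  rcases Sym2.mem_iff.mp hx with rfl | rfl
  · exact ⟨v, rfl, hh⟩
  · exact ⟨u, Sym2.eq_swap, isHullEdge_symm hh⟩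

open Classical in
lemma hull_bound {S : Set Pt} (hfin : S.Finite) {E : Set (Sym2 Pt)}
    (hE : IsEdgeSetOn S E) (hEfin : E.Finite) :
    ({e ∈ E | ∃ u v : Pt, e = s(u, v) ∧ IsHullEdge S u v} : Set (Sym2 Pt)).ncard ≤ S.ncard := by
  set H : Set (Sym2 Pt) := {e ∈ E | ∃ u v : Pt, e = s(u, v) ∧ IsHullEdge S u v} with hH
  have hHfin : H.Finite := hEfin.subset (Set.sep_subset _ _)
  have hHE : ∀ e ∈ H, ∃ u v : Pt, e = s(u, v) ∧ u ≠ v ∧ u ∈ S ∧ v ∈ S :=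
    fun e he => edge_rep hE e he.1
  have hdc := double_count hfin hHfin hHE
  have hfib : ∀ x ∈ hfin.toFinset, (hHfin.toFinset.filter (fun e => x ∈ e)).card ≤ 2 := by
    intro x hxS
    by_contra hcon
    push_neg at hcon
    obtain ⟨e1, he1, e2, he2, e3, he3, h12, h13, h23⟩ := Finset.two_lt_card.mp hcon
    simp only [Finset.mem_filter, Set.Finite.mem_toFinset] at he1 he2 he3
    obtain ⟨t1, het1, hh1⟩ := hull_mem_rep he1.1.2 he1.2
    obtain ⟨t2, het2, hh2⟩ := hull_mem_rep he2.1.2 he2.2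
    obtain ⟨t3, het3, hh3⟩ := hull_mem_rep he3.1.2 he3.2
    have ht1S : t1 ∈ S := (hE _ he1.1.1).2 t1 (het1 ▸ Sym2.mem_mk_right x t1)
    have ht2S : t2 ∈ S := (hE _ he2.1.1).2 t2 (het2 ▸ Sym2.mem_mk_right x t2)
    have ht3S : t3 ∈ S := (hE _ he3.1.1).2 t3 (het3 ▸ Sym2.mem_mk_right x t3)
    have ht12 : t1 ≠ t2 := by rintro rfl; exact h12 (het1.symm ▸ het2 ▸ rfl)
    have ht13 : t1 ≠ t3 := by rintro rfl; exact h13 (het1.symm ▸ het3 ▸ rfl)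
    have ht23 : t2 ≠ t3 := by rintro rfl; exact h23 (het2.symm ▸ het3 ▸ rfl)
    exact hull_three ht1S ht2S ht3S hh1.1 hh2.1 hh3.1 ht12 ht13 ht23 hh1 hh2 hh3
  have hsum : ∑ x ∈ hfin.toFinset, (hHfin.toFinset.filter (fun e => x ∈ e)).card
      ≤ 2 * hfin.toFinset.card := by
    calc ∑ x ∈ hfin.toFinset, (hHfin.toFinset.filter (fun e => x ∈ e)).card
        ≤ ∑ _x ∈ hfin.toFinset, 2 := Finset.sum_le_sum hfib
      _ = 2 * hfin.toFinset.card := by rw [Finset.sum_const, smul_eq_mul, mul_comm]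
  rw [Set.ncard_eq_toFinset_card _ hHfin, Set.ncard_eq_toFinset_card _ hfin]
  omega


/-- No biplane graph on a finite point set in convex position is
6-connected. -/
theorem statement2 (S : Set Pt) (hfin : S.Finite) (hconv : InConvexPos S)
    (E : Set (Sym2 Pt)) (hbi : IsBiplaneGraph S E) :
    ¬ KConnected 6 S E := by
  rintro ⟨hn6, hcon⟩
  classical
  obtain ⟨hE, E₁, E₂, hEeq, hP1, hP2⟩ := hbi
  have hEfin : E.Finite := by
    apply Set.Finite.subset (Set.Finite.image (Function.uncurry Sym2.mk) (hfin.prod hfin))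
    intro e he
    obtain ⟨u, v, rfl, -, hu, hv⟩ := edge_rep hE e he
    exact ⟨(u, v), ⟨hu, hv⟩, rfl⟩
  have hE1fin : E₁.Finite := hEfin.subset (hEeq ▸ Set.subset_union_left)
  have hE2fin : E₂.Finite := hEfin.subset (hEeq ▸ Set.subset_union_right)
  set n := S.ncard with hn
  set H : Set (Sym2 Pt) := {e ∈ E | ∃ u v : Pt, e = s(u, v) ∧ IsHullEdge S u v} with hH
  set D1 : Set (Sym2 Pt) := {e ∈ E₁ | IsDiagOf S e} with hD1
  set D2 : Set (Sym2 Pt) := {e ∈ E₂ | IsDiagOf S e} with hD2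
  have hHfin : H.Finite := hEfin.subset (Set.sep_subset _ _)
  have hD1fin : D1.Finite := hE1fin.subset (Set.sep_subset _ _)
  have hD2fin : D2.Finite := hE2fin.subset (Set.sep_subset _ _)
  have hcover : E ⊆ H ∪ (D1 ∪ D2) := by
    intro e he
    obtain ⟨u, v, rfl, huv, hu, hv⟩ := edge_rep hE e he
    rcases edge_classify hconv huv hu hv with hh | hd
    · exact Or.inl ⟨he, u, v, rfl, hh⟩
    · rw [hEeq] at he
      rcases he with h1 | h2
      · exact Or.inr (Or.inl ⟨h1, hd⟩)
      · exact Or.inr (Or.inr ⟨h2, hd⟩)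
  have hHb : H.ncard ≤ n := hull_bound hfin hE hEfin
  have hDb : ∀ Ei : Set (Sym2 Pt), IsPlaneGraph S Ei →
      ({e ∈ Ei | IsDiagOf S e} : Set (Sym2 Pt)).ncard + 3 ≤ n ∨
        ({e ∈ Ei | IsDiagOf S e} : Set (Sym2 Pt)) = ∅ := by
    intro Ei hPi
    by_cases hne : ({e ∈ Ei | IsDiagOf S e} : Set (Sym2 Pt)).Nonempty
    · exact Or.inl (diag_bound n S hfin rfl hconv _ (fun e he => he.2)
        (fun e he f hf hef => hPi.2 e he.1 f hf.1 hef) hne)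
    · exact Or.inr (Set.not_nonempty_iff_eq_empty.mp hne)
  have hD1b : D1.ncard ≤ n - 3 := by
    have h := hDb E₁ hP1
    rw [← hD1] at h
    rcases h with h | h
    · omega
    · rw [h, Set.ncard_empty]; omega
  have hD2b : D2.ncard ≤ n - 3 := by
    have h := hDb E₂ hP2
    rw [← hD2] at h
    rcases h with h | h
    · omega
    · rw [h, Set.ncard_empty]; omega
  have hEb : E.ncard ≤ 3 * n - 6 := by
    have h1 := Set.ncard_le_ncard hcover (hHfin.union (hD1fin.union hD2fin))
    have h2 := Set.ncard_union_le H (D1 ∪ D2)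
    have h3 := Set.ncard_union_le D1 D2
    omega
  have hdc := double_count hfin hEfin (edge_rep hE)
  have hc1 : hfin.toFinset.card = n := (Set.ncard_eq_toFinset_card _ hfin).symm
  have hc2 : hEfin.toFinset.card = E.ncard := (Set.ncard_eq_toFinset_card _ hEfin).symm
  have hmindeg : ∃ x ∈ hfin.toFinset, (hEfin.toFinset.filter (fun e => x ∈ e)).card ≤ 5 := by
    by_contra hcontra
    push_neg at hcontra
    have hge : ∀ x ∈ hfin.toFinset, 6 ≤ (hEfin.toFinset.filter (fun e => x ∈ e)).card :=
      fun x hx => hcontra x hx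
    have hsum := Finset.card_nsmul_le_sum hfin.toFinset _ 6 hge
    rw [hdc, smul_eq_mul] at hsum
    omega
  obtain ⟨x, hxSf, hdeg⟩ := hmindeg
  have hxS : x ∈ S := hfin.mem_toFinset.mp hxSf
  set C : Set Pt := {w | w ∈ S ∧ w ≠ x ∧ s(x, w) ∈ E} with hC
  have hCS : C ⊆ S := fun w hw => hw.1
  have hCfin : C.Finite := hfin.subset hCS
  have hCcard : C.ncard ≤ 5 := by
    have hmap : ∀ w ∈ C,
        (fun w => s(x, w)) w ∈ (↑(hEfin.toFinset.filter (fun e => x ∈ e)) : Set (Sym2 Pt)) := by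
      intro w hw
      simp only [Finset.coe_filter, Set.mem_setOf_eq, Set.Finite.mem_toFinset]
      exact ⟨hw.2.2, Sym2.mem_mk_left x w⟩
    have hinj : Set.InjOn (fun w => s(x, w)) C := by
      intro w1 h1 w2 h2 heq
      exact Sym2.congr_right.mp heq
    have hcc := Set.ncard_le_ncard_of_injOn _ hmap hinj (Set.toFinite _)
    rw [Set.ncard_coe_finset] at hcc
    omega
  have hCc6 : C.ncard < 6 := by omega
  have hconn := hcon C hCS hCc6
  have hxSC : x ∈ S \ C := ⟨hxS, fun hxC => hxC.2.1 rfl⟩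
  have h2le : 2 ≤ (S \ C).ncard := by
    rw [Set.ncard_diff hCS hCfin]
    have := Set.ncard_le_ncard hCS hfin
    omega
  obtain ⟨a1, ha1, a2, ha2, ha12⟩ := (Set.one_lt_ncard (s := S \ C) hfin.diff).mp (by omega)
  have hy : ∃ y ∈ S \ C, y ≠ x := by
    by_cases h : a1 = x
    · exact ⟨a2, ha2, fun hh => ha12 (by rw [h, hh])⟩
    · exact ⟨a1, ha1, h⟩
  obtain ⟨y, hySC, hyx⟩ := hy
  obtain ⟨w⟩ := hconn.preconnected ⟨x, hxSC⟩ ⟨y, hySC⟩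
  have hnnil : ¬ w.Nil := SimpleGraph.Walk.not_nil_of_ne
    (fun h => hyx (congrArg Subtype.val h).symm)
  have hadj := w.adj_snd hnnil
  set z := w.getVert 1 with hz
  have hadj' : (SimpleGraph.fromEdgeSet E).Adj x z.val := hadj
  rw [SimpleGraph.fromEdgeSet_adj] at hadj'
  have hzC : z.val ∈ C := ⟨z.2.1, Ne.symm hadj'.2, hadj'.1⟩
  exact z.2.2 hzC
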